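/- For η = 0, the recurrence Q_{k+1} = η Q_k − h_k(n,L) Q_{k−1} with Q_{−1}=0, Q_0=1 yields Q_{2k+1}(n,L;0) = 0 and Q_{2k}(n,L;0) = (−1)^k (2k)! (n−k)! (2n−4k+1)! Γ(L+k+1) Γ(L+n+2) / (k! (n−2k)! (2n−2k+1)! Γ(L+1) Γ(L+n−k+2)) for all k with 2k ≤ n. -/
import Mathlib


/-- α_k(n,L) = 2(2n-2k+1)(L+n+1) / ((2n-k+1)(2L+2n-k+2)). -/
noncomputable def alphF (k n L : ℝ) : ℝ :=
  2 * (2*n - 2*k + 1) * (L + n + 1) / ((2*n - k + 1) * (2*L + 2*n - k + 2))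

/-- β_k(n,L) = k(2L+k+1) / ((2n-k+1)(2L+2n-k+2)). -/
noncomputable def betF (k n L : ℝ) : ℝ :=
  k * (2*L + k + 1) / ((2*n - k + 1) * (2*L + 2*n - k + 2))

/-- h_k(n,L) = k(2L+k+1)(2n-k+2)(2L+2n-k+3) / (4(2n-2k+1)(2n-2k+3)). -/
noncomputable def hF (k n L : ℝ) : ℝ :=
  k * (2*L + k + 1) * (2*n - k + 2) * (2*L + 2*n - k + 3) /
    (4 * (2*n - 2*k + 1) * (2*n - 2*k + 3))

/-- The monic polynomials Q_k(n,L;η): Q₀ = 1, Q₁ = η (from Q_{-1} = 0) and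
Q_{k+1} = η Q_k - h_k(n,L) Q_{k-1}. -/
noncomputable def Qpoly (n L : ℝ) : ℕ → ℝ → ℝ
  | 0, _ => 1
  | 1, η => η
  | (k + 2), η => η * Qpoly n L (k + 1) η - hF ((k : ℝ) + 1) n L * Qpoly n L k η

set_option maxHeartbeats 1000000 in
/-- For η = 0: Q_{2k+1}(n,L;0) = 0 and
Q_{2k}(n,L;0) = (-1)^k (2k)! (n-k)! (2n-4k+1)! Γ(L+k+1) Γ(L+n+2)
              / (k! (n-2k)! (2n-2k+1)! Γ(L+1) Γ(L+n-k+2)) for 2k ≤ n. -/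
theorem stmt_14 (n : ℕ) (L : ℝ) (hL : L > -(3/2)) (hL1 : L ≠ -1) :
    ∀ k : ℕ, 2 * k ≤ n →
      Qpoly (n : ℝ) L (2 * k + 1) 0 = 0 ∧
      Qpoly (n : ℝ) L (2 * k) 0 =
        (-1 : ℝ) ^ k * (Nat.factorial (2 * k)) * (Nat.factorial (n - k)) *
          (Nat.factorial (2 * n - 4 * k + 1)) * Real.Gamma (L + k + 1) *
          Real.Gamma (L + n + 2) /
        ((Nat.factorial k) * (Nat.factorial (n - 2 * k)) *
          (Nat.factorial (2 * n - 2 * k + 1)) * Real.Gamma (L + 1) *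
          Real.Gamma (L + (n : ℝ) - (k : ℝ) + 2)) := by
  have hG1 : Real.Gamma (L + 1) ≠ 0 := by
    apply Real.Gamma_ne_zero
    intro m
    match m with
    | 0 => push_cast; intro h; exact hL1 (by linarith)
    | (m+1) => push_cast; intro h; have : (m:ℝ) ≥ 0 := Nat.cast_nonneg m; linarith
  have hGn : Real.Gamma (L + n + 2) ≠ 0 := by
    have h0 : (0:ℝ) ≤ (n:ℝ) := Nat.cast_nonneg n
    exact (Real.Gamma_pos_of_pos (by linarith)).ne'
  intro k
  induction k with
  | zero =>
    intro _
    refine ⟨rfl, ?_⟩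
    show (1 : ℝ) = _
    norm_num
    rw [div_self]
    positivity
  | succ k ih =>
    intro hk
    have hk' : 2 * k ≤ n := by omega
    obtain ⟨hodd, heven⟩ := ih hk'
    constructor
    · have e : 2 * (k+1) + 1 = 2*k+1+2 := by ring
      rw [e]
      show (0:ℝ) * _ - _ * Qpoly (n:ℝ) L (2*k+1) 0 = 0
      rw [hodd]; ring
    · obtain ⟨m, hm⟩ := Nat.exists_eq_add_of_le hk
      have hn : (n : ℝ) = 2*(k:ℝ) + 2 + (m:ℝ) := by rw [hm]; push_cast; ring
      have e1 : n - k = k + 2 + m := by omega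
      have e2 : 2 * n - 4 * k + 1 = 2*m + 5 := by omega
      have e3 : n - 2 * k = m + 2 := by omega
      have e4 : 2 * n - 2 * k + 1 = 2*k + 2*m + 5 := by omega
      have f1 : n - (k+1) = k + 1 + m := by omega
      have f2 : 2 * n - 4 * (k+1) + 1 = 2*m + 1 := by omega
      have f3 : n - 2 * (k+1) = m := by omega
      have f4 : 2 * n - 2 * (k+1) + 1 = 2*k + 2*m + 3 := by omega
      rw [e1, e2, e3, e4] at heven
      rw [f1, f2, f3, f4]
      have e : 2 * (k+1) = 2*k + 2 := by ring
      rw [e]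
      show (0:ℝ) * _ - hF ((↑(2*k):ℝ) + 1) (n:ℝ) L * Qpoly (n:ℝ) L (2*k) 0 = _
      rw [heven]
      rw [hF, hn]
      push_cast
      -- normalize the hF denominator
      have hd : (4 * (2 * (2 * (k:ℝ) + 2 + ↑m) - 2 * (2 * ↑k + 1) + 1) *
          (2 * (2 * ↑k + 2 + ↑m) - 2 * (2 * ↑k + 1) + 3)) = 4 * (2*(m:ℝ)+3) * (2*↑m+5) := by ring
      rw [hd]
      -- Gamma rewrites
      have hg1 : L + (2 * (k:ℝ) + 2 + ↑m) - ↑k + 2 = (L + ↑k + ↑m + 3) + 1 := by ring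
      have hg2 : L + (2 * (k:ℝ) + 2 + ↑m) - (↑k + 1) + 2 = L + ↑k + ↑m + 3 := by ring
      have hg3 : L + ((k:ℝ) + 1) + 1 = (L + ↑k + 1) + 1 := by ring
      have hkm3 : L + (k:ℝ) + ↑m + 3 ≠ 0 := by
        have : (0:ℝ) ≤ (k:ℝ) := Nat.cast_nonneg k
        have : (0:ℝ) ≤ (m:ℝ) := Nat.cast_nonneg m
        linarith
      have hk1 : L + (k:ℝ) + 1 ≠ 0 := by
        rcases Nat.eq_zero_or_pos k with h | h
        · subst h; push_cast; intro hc; exact hL1 (by linarith)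
        · have : (1:ℝ) ≤ (k:ℝ) := by exact_mod_cast h
          intro hc; linarith
      rw [hg1, hg2, hg3, Real.Gamma_add_one hkm3, Real.Gamma_add_one hk1]
      -- factorial rewrites
      have F1 : ((2*k+2).factorial : ℝ) = (2*(k:ℝ)+2) * (2*↑k+1) * (2*k).factorial := by
        rw [show 2*k+2 = (2*k+1)+1 by ring, Nat.factorial_succ, Nat.factorial_succ]
        push_cast; ring
      have F2 : ((k+2+m).factorial : ℝ) = ((k:ℝ)+2+↑m) * (k+1+m).factorial := by
        rw [show k+2+m = (k+1+m)+1 by ring, Nat.factorial_succ]; push_cast; ring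
      have F3 : ((2*m+5).factorial : ℝ) = (2*(m:ℝ)+5)*(2*↑m+4)*(2*↑m+3)*(2*↑m+2) * (2*m+1).factorial := by
        rw [show 2*m+5 = (2*m+4)+1 by ring, Nat.factorial_succ,
            show 2*m+4 = (2*m+3)+1 by ring, Nat.factorial_succ,
            show 2*m+3 = (2*m+2)+1 by ring, Nat.factorial_succ,
            show 2*m+2 = (2*m+1)+1 by ring, Nat.factorial_succ]
        push_cast; ring
      have F4 : ((m+2).factorial : ℝ) = ((m:ℝ)+2)*(↑m+1) * m.factorial := by
        rw [show m+2 = (m+1)+1 by ring, Nat.factorial_succ, Nat.factorial_succ]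
        push_cast; ring
      have F5 : ((2*k+2*m+5).factorial : ℝ) = (2*(k:ℝ)+2*↑m+5)*(2*↑k+2*↑m+4) * (2*k+2*m+3).factorial := by
        rw [show 2*k+2*m+5 = (2*k+2*m+4)+1 by ring, Nat.factorial_succ,
            show 2*k+2*m+4 = (2*k+2*m+3)+1 by ring, Nat.factorial_succ]
        push_cast; ring
      have F6 : ((k+1).factorial : ℝ) = ((k:ℝ)+1) * k.factorial := by
        rw [Nat.factorial_succ]; push_cast; ring
      rw [F1, F2, F3, F4, F5, F6]
      -- nonzero facts
      have nz1 : ((k.factorial : ℝ)) ≠ 0 := by exact_mod_cast k.factorial_ne_zero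
      have nz2 : ((m.factorial : ℝ)) ≠ 0 := by exact_mod_cast m.factorial_ne_zero
      have nz3 : (((2*m+1).factorial : ℝ)) ≠ 0 := by exact_mod_cast (2*m+1).factorial_ne_zero
      have nz4 : (((2*k+2*m+3).factorial : ℝ)) ≠ 0 := by exact_mod_cast (2*k+2*m+3).factorial_ne_zero
      have km0 : (0:ℝ) ≤ (k:ℝ) := Nat.cast_nonneg k
      have mm0 : (0:ℝ) ≤ (m:ℝ) := Nat.cast_nonneg m
      have nz5 : Real.Gamma (L + ↑k + 1) ≠ 0 := by
        rcases Nat.eq_zero_or_pos k with h | h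
        · subst h; push_cast; simpa using hG1
        · have : (1:ℝ) ≤ (k:ℝ) := by exact_mod_cast h
          exact (Real.Gamma_pos_of_pos (by linarith)).ne'
      have nz6 : Real.Gamma (L + ↑k + ↑m + 3) ≠ 0 :=
        (Real.Gamma_pos_of_pos (by linarith)).ne'
      have nz7 : Real.Gamma (L + (2 * (k:ℝ) + 2 + ↑m) + 2) ≠ 0 :=
        (Real.Gamma_pos_of_pos (by linarith)).ne'
      have nz8 : (2*(m:ℝ)+3) ≠ 0 := by linarith
      have nz9 : (2*(m:ℝ)+5) ≠ 0 := by linarith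
      field_simp
      ring
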